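/- Let b ∈ ℝ with 0 < |b| < 1, and let τ : ℝ² → ℝ be defined by τ(0,0) = 0 and, for (x, ξ) ≠ (0,0), τ(x, ξ) = −2√(x² + ξ²) · sin( (1/3) · arcsin( b x³ / (x² + ξ²)^{3/2} ) ). Then there exist no open neighborhood V of (0,0) in ℝ² and no function ρ : V → ℝ continuous at (0,0) such that τ(x, ξ) = x · ρ(x, ξ) for all (x, ξ) ∈ V. -/

import Mathlib

/-!
A factor `ρ` continuous at the origin would have `ρ(0,0)` equal to the limit of `τ/x` along
every curve into the origin with `x ≠ 0`. On the axis `ξ = 0` this quotient is the constant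
`-2 sin (arcsin b / 3) ≠ 0`. On the other hand, writing `z = sin (arcsin w / 3)`, the triple-angle
formula gives `w = z (3 - 4 z²)` with `|z| ≤ 1/2`, so `|z| ≤ |w|/2` and hence
`|τ(x, ξ)| ≤ |b| |x|³ / (x² + ξ²)`; along the parabola `x = ξ²` the quotient is therefore
`O(ξ²)`, forcing `ρ(0,0) = 0`.
-/

/-- The root of the cubic `τ³ − 3(x²+ξ²)τ − 2bx³` that vanishes identically on the line
`x = 0`, given by the explicit trigonometric formula of Section 4. -/
noncomputable def tauRoot (b : ℝ) (p : ℝ × ℝ) : ℝ :=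
  if p = (0, 0) then 0
  else
    -2 * Real.sqrt (p.1 ^ 2 + p.2 ^ 2) *
      Real.sin ((1 / 3) * Real.arcsin (b * p.1 ^ 3 / (p.1 ^ 2 + p.2 ^ 2) ^ ((3:ℝ) / 2)))

open Real Filter Topology

lemma abs_sin_arcsin_div_three_le {z : ℝ} (hz : |z| ≤ 1) :
    |sin (arcsin z / 3)| ≤ |z| / 2 := by
  set s := sin (arcsin z / 3)
  have hpi := pi_pos
  have h_lo := neg_pi_div_two_le_arcsin z
  have h_hi := arcsin_le_pi_div_two z
  have hs : |s| ≤ 1 / 2 := by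
    rw [abs_le, ← sin_pi_div_six, ← sin_neg]
    exact ⟨sin_le_sin_of_le_of_le_pi_div_two (by linarith) (by linarith) (by linarith),
      sin_le_sin_of_le_of_le_pi_div_two (by linarith) (by linarith) (by linarith)⟩
  have hz_eq : z = s * (3 - 4 * s ^ 2) := by
    have := sin_three_mul (arcsin z / 3)
    rw [mul_div_cancel₀ _ three_ne_zero, sin_arcsin (abs_le.mp hz).1 (abs_le.mp hz).2] at this
    rw [this]; ring
  have h_factor : 2 ≤ |3 - 4 * s ^ 2| := by
    have : s ^ 2 ≤ 1 / 4 := by nlinarith [sq_abs s, abs_nonneg s]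
    rw [abs_of_nonneg (by linarith)]; linarith
  rw [hz_eq, abs_mul]
  nlinarith [abs_nonneg s]

lemma abs_tauRoot_le {b : ℝ} (hb : |b| ≤ 1) (p : ℝ × ℝ) :
    |tauRoot b p| ≤ |b| * |p.1| ^ 3 / (p.1 ^ 2 + p.2 ^ 2) := by
  by_cases hp : p = (0, 0)
  · simp [tauRoot, hp]
  set r := p.1 ^ 2 + p.2 ^ 2
  have hr : 0 < r := by
    have : p.1 ≠ 0 ∨ p.2 ≠ 0 := by
      by_contra! h; exact hp (Prod.ext h.1 h.2)
    rcases this with h | h <;> positivity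
  have hsqrt : 0 < √r := sqrt_pos.mpr hr
  set z := b * p.1 ^ 3 / r ^ ((3:ℝ) / 2)
  have hz : |z| = |b| * |p.1| ^ 3 / √r ^ 3 := by
    rw [abs_div, abs_mul, abs_pow, rpow_div_two_eq_sqrt _ hr.le]
    norm_cast
    rw [abs_of_pos (pow_pos hsqrt 3)]
  have hz1 : |z| ≤ 1 := by
    have : |p.1| ≤ √r := abs_le_sqrt (by nlinarith [sq_nonneg p.2])
    rw [hz, div_le_one (by positivity)]
    calc |b| * |p.1| ^ 3 ≤ 1 * √r ^ 3 := by gcongr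
      _ = √r ^ 3 := one_mul _
  have hτ : tauRoot b p = -2 * √r * sin (arcsin z / 3) := by
    rw [tauRoot, if_neg hp, one_div_mul_eq_div]
  calc |tauRoot b p| = 2 * √r * |sin (arcsin z / 3)| := by
        rw [hτ, abs_mul, abs_mul, abs_of_pos hsqrt]; norm_num
    _ ≤ 2 * √r * (|z| / 2) := by gcongr; exact abs_sin_arcsin_div_three_le hz1
    _ = |b| * |p.1| ^ 3 / r := by
        rw [hz, pow_succ √r 2, sq_sqrt hr.le]; field_simp

lemma tauRoot_of_snd_eq_zero (b : ℝ) {x : ℝ} (hx : 0 < x) :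
    tauRoot b (x, 0) = -2 * sin (arcsin b / 3) * x := by
  have hne : ((x, 0) : ℝ × ℝ) ≠ (0, 0) := by simp [hx.ne']
  have hsqrt : √(x ^ 2 + 0 ^ 2) = x := by simp [sqrt_sq hx.le]
  rw [tauRoot, if_neg hne, rpow_div_two_eq_sqrt _ (by positivity), hsqrt]
  norm_cast
  rw [mul_div_cancel_right₀ _ (by positivity)]
  ring_nf

lemma abs_tauRoot_parabola_div_le {b : ℝ} (hb : |b| ≤ 1) {t : ℝ} (ht : t ≠ 0) :
    |tauRoot b (t ^ 2, t) / t ^ 2| ≤ |b| * t ^ 2 := by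
  have ht2 : 0 < t ^ 2 := by positivity
  rw [abs_div, abs_of_pos ht2, div_le_iff₀ ht2]
  calc |tauRoot b (t ^ 2, t)| ≤ |b| * |t ^ 2| ^ 3 / ((t ^ 2) ^ 2 + t ^ 2) := abs_tauRoot_le hb _
    _ ≤ |b| * |t ^ 2| ^ 3 / t ^ 2 := by gcongr; nlinarith
    _ = |b| * t ^ 2 * t ^ 2 := by rw [abs_of_pos ht2]; field_simp

lemma sin_arcsin_div_three_ne_zero {b : ℝ} (hb : b ≠ 0) : sin (arcsin b / 3) ≠ 0 := by
  have hpi := pi_pos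
  have h_lo := neg_pi_div_two_le_arcsin b
  have h_hi := arcsin_le_pi_div_two b
  rw [Ne, sin_eq_zero_iff_of_lt_of_lt (by linarith) (by linarith), div_eq_zero_iff,
    arcsin_eq_zero_iff]
  simp [hb]

lemma tendsto_div_of_eq_mul {X α : Type*} [TopologicalSpace X] {f g ρ : X → ℝ} {a : X}
    {V : Set X} (hV : V ∈ 𝓝 a) (hρ : ContinuousAt ρ a) (hfac : ∀ p ∈ V, f p = g p * ρ p)
    {l : Filter α} {γ : α → X} (hγ : Tendsto γ l (𝓝 a)) (hg : ∀ᶠ t in l, g (γ t) ≠ 0) :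
    Tendsto (fun t => f (γ t) / g (γ t)) l (𝓝 (ρ a)) := by
  refine (hρ.tendsto.comp hγ).congr' ?_
  filter_upwards [hγ hV, hg] with t hV hg
  simp [hfac _ hV, hg]

/-- The root `tauRoot` cannot be written as `x · ρ(x, ξ)` near the origin with `ρ`
continuous at `(0,0)`: the contradiction concluding Section 4 of the paper. -/
theorem no_continuous_factor (b : ℝ) (hb₀ : 0 < |b|) (hb₁ : |b| < 1) :
    ¬ ∃ V : Set (ℝ × ℝ), IsOpen V ∧ ((0, 0) : ℝ × ℝ) ∈ V ∧
        ∃ ρ : ℝ × ℝ → ℝ, ContinuousWithinAt ρ V ((0, 0) : ℝ × ℝ) ∧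
          ∀ p ∈ V, tauRoot b p = p.1 * ρ p := by
  rintro ⟨V, hV, h0V, ρ, hρ, hfac⟩
  have hVnhds : V ∈ 𝓝 ((0, 0) : ℝ × ℝ) := hV.mem_nhds h0V
  have hρ0 : ContinuousAt ρ (0, 0) := hρ.continuousAt hVnhds
  have h_pos : ∀ᶠ t : ℝ in 𝓝[>] 0, 0 < t := self_mem_nhdsWithin
  have h_axis : ρ (0, 0) = -2 * sin (arcsin b / 3) := by
    have hγ : Tendsto (fun t : ℝ => ((t, 0) : ℝ × ℝ)) (𝓝[>] 0) (𝓝 (0, 0)) :=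
      ((continuous_id.prodMk continuous_const).tendsto' 0 (0, 0) rfl).mono_left
        nhdsWithin_le_nhds
    refine tendsto_nhds_unique
      (tendsto_div_of_eq_mul hVnhds hρ0 hfac hγ (h_pos.mono fun t ht => ht.ne')) ?_
    refine tendsto_const_nhds.congr' ?_
    filter_upwards [h_pos] with t ht
    rw [tauRoot_of_snd_eq_zero b ht, mul_div_cancel_right₀ _ ht.ne']
  have h_parabola : ρ (0, 0) = 0 := by
    have hγ : Tendsto (fun t : ℝ => ((t ^ 2, t) : ℝ × ℝ)) (𝓝[>] 0) (𝓝 (0, 0)) :=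
      (((continuous_pow 2).prodMk continuous_id).tendsto' 0 (0, 0) (by simp)).mono_left
        nhdsWithin_le_nhds
    have h_bound : Tendsto (fun t : ℝ => |b| * t ^ 2) (𝓝[>] 0) (𝓝 0) :=
      ((continuous_const.mul (continuous_pow 2)).tendsto' 0 0 (by simp)).mono_left
        nhdsWithin_le_nhds
    refine tendsto_nhds_unique
      (tendsto_div_of_eq_mul hVnhds hρ0 hfac hγ (h_pos.mono fun t ht => by positivity)) ?_
    refine squeeze_zero_norm' ?_ h_bound
    filter_upwards [h_pos] with t ht
    exact abs_tauRoot_parabola_div_le hb₁.le ht.ne'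
  exact sin_arcsin_div_three_ne_zero (abs_pos.mp hb₀) (by linarith)
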